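/- arXiv:0902.4141 — 2 statements merged into one kernel-verified Lean document; each statement's English description precedes it below -/
import Mathlib

section
/- For a density matrix ρ, a Hermitian matrix H, and α ∈ [0,1], the Wigner–Yanase–Dyson skew information I_{ρ,α}(H) = Tr[ρH²] − Tr[ρ^α H ρ^{1−α} H] is at most the generalized skew information K_{ρ,α}(H) = (1/2)Tr[(i[(ρ^α+ρ^{1−α})/2, H])²] (with the sign convention making both quantities real and K defined via the commutator squared with a minus sign, i.e. K_{ρ,α}(H) = −(1/2)Tr[[(ρ^α+ρ^{1−α})/2, H]²]). -/
/-!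
With `X = i[ρ^α, H]` and `Y = i[ρ^{1-α}, H]`, both Hermitian, the commutator in `K` is
`(X + Y)/2`, so `K - I = (1/8) Tr((X - Y)²) = (1/8) Tr((X - Y)ᴴ (X - Y)) ≥ 0`.
-/

open Matrix ComplexOrder

/-- The real power of a positive semidefinite matrix, defined via the
continuous functional calculus (spectral decomposition). -/
noncomputable def mpow {n : Type*} [Fintype n] [DecidableEq n]
    (ρ : Matrix n n ℂ) (hρ : ρ.PosSemidef) (α : ℝ) : Matrix n n ℂ :=
  hρ.1.cfc (fun x : ℝ => x ^ α)

lemma mpow_isHermitian {n : Type*} [Fintype n] [DecidableEq n]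
    (ρ : Matrix n n ℂ) (hρ : ρ.PosSemidef) (α : ℝ) : (mpow ρ hρ α).IsHermitian := by
  rw [mpow, ← hρ.1.cfc_eq]
  exact cfc_predicate _ ρ

namespace Matrix
variable {n : Type*} [Fintype n]

lemma IsHermitian.I_smul_commutator {A H : Matrix n n ℂ} (hA : A.IsHermitian)
    (hH : H.IsHermitian) : (Complex.I • (A * H - H * A)).IsHermitian := by
  rw [IsHermitian, conjTranspose_smul, conjTranspose_sub, conjTranspose_mul,
    conjTranspose_mul, hA.eq, hH.eq, Complex.star_def, Complex.conj_I, neg_smul, ← smul_neg,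
    neg_sub]

lemma IsHermitian.trace_mul_le_trace_sq_midpoint [DecidableEq n] {X Y : Matrix n n ℂ}
    (hX : X.IsHermitian) (hY : Y.IsHermitian) : (X * Y).trace ≤ (((1/2 : ℂ) • (X + Y)) ^ 2).trace := by
  have hgap : (((1/2 : ℂ) • (X + Y)) ^ 2).trace - (X * Y).trace
      = (1/4 : ℂ) * ((X - Y)ᴴ * (X - Y)).trace := by
    rw [conjTranspose_sub, hX.eq, hY.eq, sq]
    simp only [Matrix.smul_mul, Matrix.mul_smul, Matrix.sub_mul, Matrix.mul_sub,
      Matrix.add_mul, Matrix.mul_add, trace_smul, trace_add, trace_sub, smul_eq_mul]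
    rw [trace_mul_comm Y X]
    ring
  rw [← sub_nonneg, hgap]
  exact mul_nonneg (by norm_num [Complex.le_def]) (posSemidef_conjTranspose_mul_self _).trace_nonneg

end Matrix

theorem stmt2_general {n : Type*} [Fintype n] [DecidableEq n]
    (ρ : Matrix n n ℂ) (hρ : ρ.PosSemidef)
    (H : Matrix n n ℂ) (hH : H.IsHermitian)
    (α : ℝ) :
    (1/2 : ℂ) * ((Complex.I • (mpow ρ hρ α * H - H * mpow ρ hρ α)) *
        (Complex.I • (mpow ρ hρ (1-α) * H - H * mpow ρ hρ (1-α)))).trace ≤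
      (1/2 : ℂ) * ((Complex.I • (((1/2 : ℂ) • (mpow ρ hρ α + mpow ρ hρ (1-α))) * H -
            H * ((1/2 : ℂ) • (mpow ρ hρ α + mpow ρ hρ (1-α))))) ^ 2).trace := by
  set A := mpow ρ hρ α
  set B := mpow ρ hρ (1-α)
  have hmid : Complex.I • (((1/2 : ℂ) • (A + B)) * H - H * ((1/2 : ℂ) • (A + B)))
      = (1/2 : ℂ) • (Complex.I • (A * H - H * A) + Complex.I • (B * H - H * B)) := by
    simp only [Matrix.smul_mul, Matrix.mul_smul, Matrix.add_mul, Matrix.mul_add, smul_sub,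
      smul_add]
    module
  rw [hmid]
  gcongr
  exact (mpow_isHermitian ρ hρ α).I_smul_commutator hH
    |>.trace_mul_le_trace_sq_midpoint ((mpow_isHermitian ρ hρ (1-α)).I_smul_commutator hH)

theorem stmt2 {n : Type*} [Fintype n] [DecidableEq n]
    (ρ : Matrix n n ℂ) (hρ : ρ.PosSemidef) (htr : ρ.trace = 1)
    (H : Matrix n n ℂ) (hH : H.IsHermitian)
    (α : ℝ) (hα : α ∈ Set.Icc (0:ℝ) 1) :
    (1/2 : ℂ) * ((Complex.I • (mpow ρ hρ α * H - H * mpow ρ hρ α)) *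
        (Complex.I • (mpow ρ hρ (1-α) * H - H * mpow ρ hρ (1-α)))).trace ≤
      (1/2 : ℂ) * ((Complex.I • (((1/2 : ℂ) • (mpow ρ hρ α + mpow ρ hρ (1-α))) * H -
            H * ((1/2 : ℂ) • (mpow ρ hρ α + mpow ρ hρ (1-α))))) ^ 2).trace :=
  stmt2_general ρ hρ H hH α
end

section
/- For a density matrix ρ, Hermitian H, and α ∈ [0,1], one has the chain of inequalities I_{ρ,α}(H) ≤ I_ρ(H) ≤ J_ρ(H) ≤ J_{ρ,α}(H), where I_ρ = I_{ρ,1/2} and J_ρ = J_{ρ,1/2}. -/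
/-!
Diagonalise `ρ = ∑ λᵢ |uᵢ⟩⟨uᵢ|` and put `wᵢⱼ = |⟨uᵢ, H₀ uⱼ⟩|²`, a symmetric nonnegative weight.
Then `Tr[ρ^β H₀ ρ^(1-β) H₀] = ∑ᵢⱼ λᵢ^β λⱼ^(1-β) wᵢⱼ`, and `Tr[ρ H₀²]` is the value at `β = 1`.
Pairing the terms `(i, j)` and `(j, i)`, the AM–GM inequality
`2 √(λᵢ λⱼ) ≤ λᵢ^β λⱼ^(1-β) + λᵢ^(1-β) λⱼ^β` shows that this sum is smallest at `β = 1/2`,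
which gives the two outer inequalities; the middle one says the sum at `β = 1/2` is nonnegative.
-/

open Matrix ComplexOrder

theorem Real.two_mul_rpow_half_mul_rpow_half_le {a b : ℝ} (ha : 0 ≤ a) (hb : 0 ≤ b) (β : ℝ) :
    2 * (a ^ (1/2 : ℝ) * b ^ (1/2 : ℝ)) ≤ a ^ β * b ^ (1 - β) + a ^ (1 - β) * b ^ β := by
  have hself : ∀ x : ℝ, 0 ≤ x → x ^ β * x ^ (1 - β) = x := fun x hx => by
    rw [← Real.rpow_add' hx (by norm_num)]; norm_num
  have hprod : (a ^ β * b ^ (1 - β)) * (a ^ (1 - β) * b ^ β) = a * b := by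
    rw [mul_mul_mul_comm, hself a ha, mul_comm (b ^ (1 - β)), hself b hb]
  have hx : 0 ≤ a ^ β * b ^ (1 - β) := by positivity
  have hy : 0 ≤ a ^ (1 - β) * b ^ β := by positivity
  have amgm := Real.geom_mean_le_arith_mean2_weighted (by norm_num : (0 : ℝ) ≤ 1/2)
    (by norm_num : (0 : ℝ) ≤ 1/2) hx hy (by norm_num)
  rw [← Real.mul_rpow hx hy, hprod, Real.mul_rpow ha hb] at amgm
  linarith

section SkewSum

variable {ι : Type*} [Fintype ι] (lam : ι → ℝ) (w : ι → ι → ℝ)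

noncomputable def skewSum (β : ℝ) : ℝ :=
  ∑ i, ∑ j, lam i ^ β * lam j ^ (1 - β) * w i j

variable {lam w}

theorem skewSum_nonneg (hlam : ∀ i, 0 ≤ lam i) (hw : ∀ i j, 0 ≤ w i j) (β : ℝ) :
    0 ≤ skewSum lam w β :=
  Finset.sum_nonneg fun i _ => Finset.sum_nonneg fun j _ =>
    mul_nonneg (mul_nonneg (Real.rpow_nonneg (hlam i) _) (Real.rpow_nonneg (hlam j) _)) (hw i j)

theorem skewSum_one_sub (hsymm : ∀ i j, w i j = w j i) (β : ℝ) :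
    skewSum lam w (1 - β) = skewSum lam w β := by
  rw [skewSum, skewSum, Finset.sum_comm]
  refine Finset.sum_congr rfl fun i _ => Finset.sum_congr rfl fun j _ => ?_
  rw [hsymm j i, sub_sub_cancel]
  ring

theorem skewSum_half_le (hlam : ∀ i, 0 ≤ lam i) (hw : ∀ i j, 0 ≤ w i j)
    (hsymm : ∀ i j, w i j = w j i) (β : ℝ) :
    skewSum lam w (1/2) ≤ skewSum lam w β := by
  have h : 2 * skewSum lam w (1/2) ≤ skewSum lam w β + skewSum lam w (1 - β) := by
    simp only [skewSum, Finset.mul_sum, ← Finset.sum_add_distrib]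
    refine Finset.sum_le_sum fun i _ => Finset.sum_le_sum fun j _ => ?_
    have := mul_le_mul_of_nonneg_right
      (Real.two_mul_rpow_half_mul_rpow_half_le (hlam i) (hlam j) β) (hw i j)
    norm_num at this ⊢
    linarith
  linarith [skewSum_one_sub (lam := lam) hsymm β]

end SkewSum

namespace Matrix

variable {n : Type*} [Fintype n] [DecidableEq n]

theorem IsHermitian.sub_trace_mul_smul_one {ρ H : Matrix n n ℂ} (hρ : ρ.IsHermitian)
    (hH : H.IsHermitian) : (H - (ρ * H).trace • (1 : Matrix n n ℂ)).IsHermitian := by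
  have hreal : star (ρ * H).trace = (ρ * H).trace := by
    rw [← trace_conjTranspose, conjTranspose_mul, hρ.eq, hH.eq, trace_mul_comm]
  rw [IsHermitian, conjTranspose_sub, hH.eq, conjTranspose_smul, conjTranspose_one, hreal]

noncomputable def IsHermitian.eigenbasisWeight {A : Matrix n n ℂ} (hA : A.IsHermitian)
    (K : Matrix n n ℂ) (i j : n) : ℝ :=
  Complex.normSq ((star (hA.eigenvectorUnitary : Matrix n n ℂ) * K * hA.eigenvectorUnitary) i j)

theorem IsHermitian.eigenbasisWeight_comm {A K : Matrix n n ℂ} (hA : A.IsHermitian)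
    (hK : K.IsHermitian) (i j : n) : hA.eigenbasisWeight K i j = hA.eigenbasisWeight K j i := by
  have hB := isHermitian_conjTranspose_mul_mul (hA.eigenvectorUnitary : Matrix n n ℂ) hK
  rw [eigenbasisWeight, eigenbasisWeight, star_eq_conjTranspose, ← hB.apply i j,
    Complex.star_def, Complex.normSq_conj]

theorem IsHermitian.trace_cfc_mul_cfc_mul {A K : Matrix n n ℂ} (hA : A.IsHermitian)
    (hK : K.IsHermitian) (f g : ℝ → ℝ) :
    (hA.cfc f * K * hA.cfc g * K).trace
      = ((∑ i, ∑ j, f (hA.eigenvalues i) * g (hA.eigenvalues j) * hA.eigenbasisWeight K i j : ℝ)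
          : ℂ) := by
  set U : Matrix n n ℂ := (hA.eigenvectorUnitary : Matrix n n ℂ)
  set B := star U * K * U with hBdef
  have hB : Bᴴ = B := isHermitian_conjTranspose_mul_mul U hK
  have hcfc : ∀ h : ℝ → ℝ,
      hA.cfc h = U * diagonal (fun i => (h (hA.eigenvalues i) : ℂ)) * star U := fun _ => rfl
  have hcycle : ∀ d₁ d₂ : n → ℂ,
      (U * diagonal d₁ * star U * K * (U * diagonal d₂ * star U) * K).trace
        = (diagonal d₁ * B * diagonal d₂ * B).trace := by
    intro d₁ d₂
    rw [show U * diagonal d₁ * star U * K * (U * diagonal d₂ * star U) * K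
        = U * (diagonal d₁ * B * diagonal d₂ * (star U * K)) by simp only [hBdef, mul_assoc],
      trace_mul_comm]
    simp only [hBdef, mul_assoc]
  rw [hcfc, hcfc, hcycle]
  push_cast
  simp only [trace, diag_apply, mul_apply, diagonal_apply, ite_mul,
    mul_ite, zero_mul, mul_zero, Finset.sum_ite_eq, Finset.sum_ite_eq', Finset.mem_univ, if_true]
  refine Finset.sum_congr rfl fun i _ => Finset.sum_congr rfl fun j _ => ?_
  rw [eigenbasisWeight, ← hBdef, Complex.normSq_eq_conj_mul_self, ← Complex.star_def,
    ← conjTranspose_apply, hB]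
  ring

end Matrix

section Mpow

variable {n : Type*} [Fintype n] [DecidableEq n] {ρ : Matrix n n ℂ}

theorem mpow_zero (hρ : ρ.PosSemidef) : mpow ρ hρ 0 = 1 := by
  rw [mpow, ← hρ.1.cfc_eq]
  simp only [Real.rpow_zero]
  exact cfc_one ℝ ρ hρ.1.isSelfAdjoint

theorem mpow_one (hρ : ρ.PosSemidef) : mpow ρ hρ 1 = ρ := by
  rw [mpow, ← hρ.1.cfc_eq]
  simp only [Real.rpow_one]
  exact cfc_id ℝ ρ hρ.1.isSelfAdjoint

theorem trace_mpow_mul_mpow_mul (hρ : ρ.PosSemidef) {K : Matrix n n ℂ} (hK : K.IsHermitian)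
    (β : ℝ) : (mpow ρ hρ β * K * mpow ρ hρ (1 - β) * K).trace
      = skewSum hρ.1.eigenvalues (hρ.1.eigenbasisWeight K) β :=
  hρ.1.trace_cfc_mul_cfc_mul hK _ _

theorem trace_mul_sq_eq_skewSum_one (hρ : ρ.PosSemidef) {K : Matrix n n ℂ} (hK : K.IsHermitian) :
    (ρ * K ^ 2).trace = skewSum hρ.1.eigenvalues (hρ.1.eigenbasisWeight K) 1 := by
  rw [← trace_mpow_mul_mpow_mul hρ hK, sub_self, mpow_zero, mpow_one, mul_one, sq, mul_assoc]

end Mpow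

theorem stmt10_general {n : Type*} [Fintype n] [DecidableEq n]
    (ρ : Matrix n n ℂ) (hρ : ρ.PosSemidef)
    (H : Matrix n n ℂ) (hH : H.IsHermitian)
    (α : ℝ) :
    let H₀ := H - (ρ * H).trace • (1 : Matrix n n ℂ)
    let I' : ℝ → ℂ := fun β =>
      (ρ * H₀ ^ 2).trace - (mpow ρ hρ β * H₀ * mpow ρ hρ (1-β) * H₀).trace
    let J' : ℝ → ℂ := fun β =>
      (ρ * H₀ ^ 2).trace + (mpow ρ hρ β * H₀ * mpow ρ hρ (1-β) * H₀).trace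
    I' α ≤ I' (1/2) ∧ I' (1/2) ≤ J' (1/2) ∧ J' (1/2) ≤ J' α := by
  intro H₀ I' J'
  have hH₀ : H₀.IsHermitian := hρ.1.sub_trace_mul_smul_one hH
  have hw : ∀ i j, 0 ≤ hρ.1.eigenbasisWeight H₀ i j := fun _ _ => Complex.normSq_nonneg _
  have hmin := skewSum_half_le hρ.eigenvalues_nonneg hw (hρ.1.eigenbasisWeight_comm hH₀) α
  have hnonneg := skewSum_nonneg hρ.eigenvalues_nonneg hw (1/2)
  simp only [I', J', trace_mpow_mul_mpow_mul hρ hH₀, trace_mul_sq_eq_skewSum_one hρ hH₀]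
  refine ⟨?_, ?_, ?_⟩ <;> norm_cast <;> linarith

theorem stmt10 {n : Type*} [Fintype n] [DecidableEq n]
    (ρ : Matrix n n ℂ) (hρ : ρ.PosSemidef) (htr : ρ.trace = 1)
    (H : Matrix n n ℂ) (hH : H.IsHermitian)
    (α : ℝ) (hα : α ∈ Set.Icc (0:ℝ) 1) :
    let H₀ := H - (ρ * H).trace • (1 : Matrix n n ℂ)
    let I' : ℝ → ℂ := fun β =>
      (ρ * H₀ ^ 2).trace - (mpow ρ hρ β * H₀ * mpow ρ hρ (1-β) * H₀).trace
    let J' : ℝ → ℂ := fun β =>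
      (ρ * H₀ ^ 2).trace + (mpow ρ hρ β * H₀ * mpow ρ hρ (1-β) * H₀).trace
    I' α ≤ I' (1/2) ∧ I' (1/2) ≤ J' (1/2) ∧ J' (1/2) ≤ J' α :=
  stmt10_general ρ hρ H hH α
end
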